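/- arXiv:2007.11172 — 2 statements merged into one kernel-verified Lean document; each statement's English description precedes it below -/
import Mathlib

section
/- Let n = m, let x, y ∈ Δ_n be fully mixed (x_i > 0 and y_i > 0 for all i), let v > 0 and 0 < z < min_i min(v, v·y_i/(1 - x_i)). Define α_i = v + z·x_i/y_i and a_i = v - z·(1 - x_i)/y_i, and let A be the matrix with A_{ii} = a_i and A_{ij} = α_j for i ≠ j. Then x^T A = v·𝟙^T and A y = v·𝟙, i.e., (x, y) is a minimax equilibrium of A with value v. -/
/-!
Off the diagonal, column `j` of `A` is the constant `α_j`, and `a_j - α_j = -z / y_j`.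
Hence `(xᵀA)_j = α_j - z x_j / y_j = v`, and `(A y)_i = ∑_j α_j y_j - z = (v + z) - z = v`.
-/

open Finset

section DiagonalPlusColumns

variable {ι R : Type*} [Fintype ι] [DecidableEq ι] [CommRing R]
  {A : Matrix ι ι R} {d c : ι → R}

theorem Matrix.sum_mul_apply_of_diag_ite (hA : ∀ i j, A i j = if i = j then d j else c j)
    (x : ι → R) (j : ι) :
    ∑ i, x i * A i j = (∑ i, x i) * c j + x j * (d j - c j) := by
  have hsplit : ∀ i, x i * A i j = x i * c j + if i = j then x i * (d j - c j) else 0 := by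
    intro i; rw [hA]; split_ifs <;> ring
  simp only [hsplit, sum_add_distrib, ← sum_mul, sum_ite_eq', mem_univ, if_true]

theorem Matrix.sum_apply_mul_of_diag_ite (hA : ∀ i j, A i j = if i = j then d j else c j)
    (y : ι → R) (i : ι) :
    ∑ j, A i j * y j = ∑ j, c j * y j + (d i - c i) * y i := by
  have hsplit : ∀ j, A i j * y j = c j * y j + if i = j then (d j - c j) * y j else 0 := by
    intro j; rw [hA]; split_ifs <;> ring
  simp only [hsplit, sum_add_distrib, sum_ite_eq, mem_univ, if_true]

end DiagonalPlusColumns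

theorem stmt_10_general (n : ℕ) (x y : Fin n → ℝ)
    (hx : x ∈ stdSimplex ℝ (Fin n)) (hy : y ∈ stdSimplex ℝ (Fin n))
    (hypos : ∀ i, 0 < y i)
    (v : ℝ)
    (z : ℝ)
    (A : Matrix (Fin n) (Fin n) ℝ)
    (hA : ∀ i j, A i j = if i = j then v - z * (1 - x j) / y j else v + z * x j / y j) :
    (∀ j, ∑ i, x i * A i j = v) ∧ (∀ i, ∑ j, A i j * y j = v) := by
  obtain ⟨-, hxs⟩ := hx
  obtain ⟨-, hys⟩ := hy
  have hdiag_sub : ∀ j, (v - z * (1 - x j) / y j) - (v + z * x j / y j) = -z / y j := by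
    intro j; field_simp; ring
  have hoff_diag : ∑ j, (v + z * x j / y j) * y j = v + z := by
    have hterm : ∀ j, (v + z * x j / y j) * y j = v * y j + z * x j := by
      intro j; field_simp [(hypos j).ne']
    simp only [hterm, sum_add_distrib, ← mul_sum, hxs, hys, mul_one]
  refine ⟨fun j => ?_, fun i => ?_⟩
  · rw [Matrix.sum_mul_apply_of_diag_ite hA, hxs, hdiag_sub]
    field_simp [(hypos j).ne']
    ring
  · rw [Matrix.sum_apply_mul_of_diag_ite hA, hoff_diag, hdiag_sub,
      div_mul_cancel₀ _ (hypos i).ne']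
    ring

theorem stmt_10 (n : ℕ) (x y : Fin n → ℝ)
    (hx : x ∈ stdSimplex ℝ (Fin n)) (hy : y ∈ stdSimplex ℝ (Fin n))
    (hxpos : ∀ i, 0 < x i) (hypos : ∀ i, 0 < y i)
    (v : ℝ) (hv : 0 < v)
    (z : ℝ) (hz0 : 0 < z) (hzv : ∀ i, z < v ∧ z < v * y i / (1 - x i))
    (A : Matrix (Fin n) (Fin n) ℝ)
    (hA : ∀ i j, A i j = if i = j then v - z * (1 - x j) / y j else v + z * x j / y j) :
    (∀ j, ∑ i, x i * A i j = v) ∧ (∀ i, ∑ j, A i j * y j = v) :=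
  stmt_10_general n x y hx hy hypos v z A hA
end

section
/- Let k < n ≤ m, x ∈ Δ_n supported on the first k coordinates, y ∈ Δ_m with y_j > 0 exactly for j ≤ l where k ≤ l, v > 0, 0 < v₁ < v·ȳ where ȳ = ∑_{j=k+1}^{l} y_j, z = (v·ȳ - v₁)/∑_{i=1}^{k} y_i, β_i = v, α_i = v + x_i(v·ȳ - v₁)/y_i, a_i = α_i - (v·ȳ - v₁)/y_i for i ≤ k. Then the matrix A with block structure (top-left k×k: a_i on diagonal, α_j off-diagonal; top-right: row i constant β_i = v; bottom-left: row entries α_j - z; bottom-right: constant v) satisfies x^T A = v·𝟙^T on columns in the support of y and A y = v·𝟙, so (x, y) is a minimax equilibrium with value v. -/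
/-!
Both identities are direct computations. Write `c = v ȳ - v₁` and `S = ∑_{j<k} y_j`, so that
`S + ȳ = 1`. Since `x` lives on the first `k` rows and `α_j - a_j = c / y_j`, column `j < k`
pays `α_j - x_j c / y_j = v` against `x`; the other columns are constantly `v`.
Since `x` sums to `1`, `∑_{j<k} α_j y_j = v S + c`: the first `k` columns overpay `c` against `y`.
In rows `i < k` the diagonal entry takes back `(α_i - a_i) y_i = c`, and in the other rows the shift
by `z` takes back `z S = c`, leaving `v S + v ȳ = v` in every row.
-/

open Finset

namespace Fin

lemma sum_filter_val_lt_congr {M : Type*} [AddCommMonoid M] {n m k : ℕ} (hkn : k ≤ n)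
    (hkm : k ≤ m) {f : Fin n → M} {g : Fin m → M}
    (hfg : ∀ (i : ℕ) (hi : i < k), f ⟨i, by omega⟩ = g ⟨i, by omega⟩) :
    ∑ i : Fin n with i.val < k, f i = ∑ j : Fin m with j.val < k, g j := by
  refine sum_bij' (fun i hi => ⟨i, ?_⟩) (fun j hj => ⟨j, ?_⟩) ?_ ?_ ?_ ?_ ?_ <;>
    simp_all <;> omega

lemma sum_filter_val_lt_add_sum_filter_le {M : Type*} [AddCommMonoid M] {m : ℕ} (k : ℕ)
    (f : Fin m → M) :
    ∑ j : Fin m with j.val < k, f j + ∑ j : Fin m with k ≤ j.val, f j = ∑ j, f j := by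
  simpa only [not_lt] using sum_filter_add_sum_filter_not univ (fun j : Fin m => (j : ℕ) < k) f

end Fin

section stdSimplex

variable {𝕜 ι : Type*} [Semiring 𝕜] [PartialOrder 𝕜] [Fintype ι] {x : ι → 𝕜} {p : ι → Prop}

lemma eq_zero_of_mem_stdSimplex (hx : x ∈ stdSimplex 𝕜 ι) (hp : ∀ i, 0 < x i → p i) {i : ι}
    (hi : ¬ p i) : x i = 0 :=
  ((hx.1 i).lt_or_eq.resolve_left (hi ∘ hp i)).symm

lemma sum_filter_eq_one_of_mem_stdSimplex [DecidablePred p] (hx : x ∈ stdSimplex 𝕜 ι)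
    (hp : ∀ i, 0 < x i → p i) : ∑ i with p i, x i = 1 := by
  rw [sum_filter_of_ne fun i _ hi => hp i ((hx.1 i).lt_of_ne' hi), hx.2]

end stdSimplex

def blockPayoff (n : ℕ) {m : ℕ} (k : ℕ) (v z : ℝ) (α a : Fin m → ℝ) : Matrix (Fin n) (Fin m) ℝ :=
  Matrix.of fun i j =>
    if (i : ℕ) < k then (if (j : ℕ) < k then (if (i : ℕ) = j then a j else α j) else v)
    else (if (j : ℕ) < k then α j - z else v)

section blockPayoff

variable {n m k : ℕ} {v z : ℝ} {α a : Fin m → ℝ}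

lemma blockPayoff_apply_of_le {i : Fin n} {j : Fin m} (hj : k ≤ (j : ℕ)) :
    blockPayoff n k v z α a i j = v := by
  simp [blockPayoff, not_lt.2 hj]

lemma sum_mul_blockPayoff_of_lt (x : Fin n → ℝ) (hx : ∀ i : Fin n, k ≤ (i : ℕ) → x i = 0)
    {j : Fin m} (hj : (j : ℕ) < k) (hjn : (j : ℕ) < n) :
    ∑ i, x i * blockPayoff n k v z α a i j = α j * ∑ i, x i + x ⟨j, hjn⟩ * (a j - α j) := by
  have hterm : ∀ i, x i * blockPayoff n k v z α a i j =
      x i * α j + if ⟨j, hjn⟩ = i then x i * (a j - α j) else 0 := by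
    intro i
    by_cases hi : (i : ℕ) < k
    · by_cases hij : ⟨j, hjn⟩ = i
      · subst hij
        simp only [blockPayoff, Matrix.of_apply, hj, if_true]
        ring
      · have hij' : (i : ℕ) ≠ j := fun h => hij (Fin.ext h.symm)
        simp [blockPayoff, hi, hj, hij, hij']
    · simp [blockPayoff, hx i (not_lt.1 hi)]
  simp only [hterm, sum_add_distrib, ← sum_mul, sum_ite_eq, mem_univ, if_true]
  ring

lemma sum_mul_blockPayoff_of_le (x : Fin n → ℝ) {j : Fin m} (hj : k ≤ (j : ℕ)) :
    ∑ i, x i * blockPayoff n k v z α a i j = v * ∑ i, x i := by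
  simp only [blockPayoff_apply_of_le hj, mul_sum, mul_comm]

lemma sum_blockPayoff_mul_of_lt (y : Fin m → ℝ) {i : Fin n} (hi : (i : ℕ) < k)
    (him : (i : ℕ) < m) :
    ∑ j, blockPayoff n k v z α a i j * y j = ∑ j : Fin m with j.val < k, α j * y j
      + (a ⟨i, him⟩ - α ⟨i, him⟩) * y ⟨i, him⟩ + v * ∑ j : Fin m with k ≤ j.val, y j := by
  have hlow : ∀ j ∈ univ.filter (fun j : Fin m => j.val < k),
      blockPayoff n k v z α a i j * y j =
        α j * y j + if ⟨i, him⟩ = j then (a j - α j) * y j else 0 := by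
    intro j hj
    by_cases hij : ⟨i, him⟩ = j
    · subst hij
      simp only [blockPayoff, Matrix.of_apply, hi, if_true]
      ring
    · have hij' : (i : ℕ) ≠ j := fun h => hij (Fin.ext h)
      simp [blockPayoff, hi, (mem_filter.1 hj).2, hij, hij']
  have hhigh : ∀ j ∈ univ.filter (fun j : Fin m => k ≤ j.val),
      blockPayoff n k v z α a i j * y j = v * y j := fun j hj => by
    rw [blockPayoff_apply_of_le (mem_filter.1 hj).2]
  rw [← Fin.sum_filter_val_lt_add_sum_filter_le k, sum_congr rfl hlow, sum_congr rfl hhigh,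
    sum_add_distrib, sum_ite_eq, if_pos (by simpa using hi), mul_sum]

lemma sum_blockPayoff_mul_of_le (y : Fin m → ℝ) {i : Fin n} (hi : k ≤ (i : ℕ)) :
    ∑ j, blockPayoff n k v z α a i j * y j = ∑ j : Fin m with j.val < k, α j * y j
      - z * ∑ j : Fin m with j.val < k, y j + v * ∑ j : Fin m with k ≤ j.val, y j := by
  have hlow : ∀ j ∈ univ.filter (fun j : Fin m => j.val < k),
      blockPayoff n k v z α a i j * y j = α j * y j - z * y j := fun j hj => by
    simp only [blockPayoff, Matrix.of_apply, not_lt.2 hi, (mem_filter.1 hj).2, if_true, if_false]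
    ring
  have hhigh : ∀ j ∈ univ.filter (fun j : Fin m => k ≤ j.val),
      blockPayoff n k v z α a i j * y j = v * y j := fun j hj => by
    rw [blockPayoff_apply_of_le (mem_filter.1 hj).2]
  rw [← Fin.sum_filter_val_lt_add_sum_filter_le k, sum_congr rfl hlow, sum_congr rfl hhigh,
    sum_sub_distrib, mul_sum, mul_sum]

end blockPayoff

lemma sum_filter_val_lt_mul_eq_of_eq_add_div {n m k : ℕ} (hkn : k ≤ n) (hkm : k ≤ m) {x : Fin n → ℝ}
    {y α : Fin m → ℝ} {v c : ℝ}
    (hα : ∀ j : Fin m, ∀ hj : (j : ℕ) < k, α j = v + x ⟨j, by omega⟩ * c / y j)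
    (hy : ∀ j : Fin m, (j : ℕ) < k → y j ≠ 0) :
    ∑ j : Fin m with j.val < k, α j * y j =
      v * ∑ j : Fin m with j.val < k, y j + c * ∑ i : Fin n with i.val < k, x i := by
  have hx : ∑ i : Fin n with i.val < k, x i * c =
      ∑ j : Fin m with j.val < k, (α j * y j - v * y j) := by
    refine Fin.sum_filter_val_lt_congr hkn hkm fun i hi => ?_
    rw [hα ⟨i, by omega⟩ hi]
    field_simp [hy ⟨i, by omega⟩ hi]
    ring
  rw [mul_comm c, sum_mul, hx, sum_sub_distrib, mul_sum]
  ring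

theorem stmt_14 (n m k l : ℕ) (hkn : k < n) (hkl : k < l) (hlm : l ≤ m)
    (x : Fin n → ℝ) (y : Fin m → ℝ)
    (hx : x ∈ stdSimplex ℝ (Fin n)) (hy : y ∈ stdSimplex ℝ (Fin m))
    (hxsupp : ∀ i : Fin n, 0 < x i ↔ (i : ℕ) < k)
    (hysupp : ∀ j : Fin m, 0 < y j ↔ (j : ℕ) < l)
    (v : ℝ)
    (ybar : ℝ) (hybar : ybar = ∑ j ∈ Finset.univ.filter (fun j : Fin m => k ≤ (j : ℕ)), y j)
    (v₁ : ℝ)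
    (z : ℝ) (hz : z = (v * ybar - v₁) / ∑ j ∈ Finset.univ.filter (fun j : Fin m => (j : ℕ) < k), y j)
    (α a : Fin m → ℝ)
    (hα : ∀ j : Fin m, ∀ hj : (j : ℕ) < k, α j = v + x ⟨(j : ℕ), by omega⟩ * (v * ybar - v₁) / y j)
    (ha : ∀ j : Fin m, (j : ℕ) < k → a j = α j - (v * ybar - v₁) / y j)
    (A : Matrix (Fin n) (Fin m) ℝ)
    (hA : ∀ i j, A i j =
      if (i : ℕ) < k then
        (if (j : ℕ) < k then (if (i : ℕ) = (j : ℕ) then a j else α j) else v)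
      else
        (if (j : ℕ) < k then α j - z else v)) :
    (∀ j : Fin m, (j : ℕ) < l → ∑ i, x i * A i j = v) ∧
    (∀ i : Fin n, ∑ j, A i j * y j = v) := by
  obtain rfl : A = blockPayoff n k v z α a := Matrix.ext hA
  have hxk : ∀ i : Fin n, 0 < x i → (i : ℕ) < k := fun i => (hxsupp i).1
  have hx0 (i : Fin n) (hi : k ≤ (i : ℕ)) : x i = 0 :=
    eq_zero_of_mem_stdSimplex hx hxk (not_lt.2 hi)
  have hxk1 := sum_filter_eq_one_of_mem_stdSimplex hx hxk
  have hyk (j : Fin m) (hj : (j : ℕ) < k) : 0 < y j := (hysupp j).2 (hj.trans hkl)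
  set S := ∑ j : Fin m with j.val < k, y j
  have hSy : S + ybar = 1 := by rw [hybar, Fin.sum_filter_val_lt_add_sum_filter_le, hy.2]
  have hk : 0 < k := Nat.pos_of_ne_zero fun hk0 => by simp [hk0] at hxk1
  have hS : 0 < S := sum_pos (fun j hj => hyk j (mem_filter.1 hj).2) ⟨⟨0, by omega⟩, by simp [hk]⟩
  have hαy : ∑ j : Fin m with j.val < k, α j * y j = v * S + (v * ybar - v₁) := by
    rw [sum_filter_val_lt_mul_eq_of_eq_add_div hkn.le (by omega) hα fun j hj => (hyk j hj).ne',
      hxk1, mul_one]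
  refine ⟨fun j _ => ?_, fun i => ?_⟩
  · rcases lt_or_ge (j : ℕ) k with hj | hj
    · rw [sum_mul_blockPayoff_of_lt x hx0 hj (by omega), hx.2, ha j hj, hα j hj]
      ring
    · rw [sum_mul_blockPayoff_of_le x hj, hx.2, mul_one]
  · rcases lt_or_ge (i : ℕ) k with hi | hi
    · rw [sum_blockPayoff_mul_of_lt y hi (by omega), hαy, ← hybar, ha _ hi]
      field_simp [(hyk ⟨i, by omega⟩ hi).ne']
      linear_combination v * hSy
    · rw [sum_blockPayoff_mul_of_le y hi, hαy, ← hybar, hz, div_mul_cancel₀ _ hS.ne']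
      linear_combination v * hSy
end
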